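/- Let X be a nonzero Banach space and 𝔄 a norm-closed, strictly semi-transitive subalgebra of L(X). Then the set of strictly cyclic vectors for 𝔄 is residual in X (its complement is of first category); in particular, 𝔄 has a strictly cyclic vector. -/

import Mathlib

/-!
Strict semi-transitivity makes the vectors that are not strictly cyclic a linear subspace: if
`A x = y` and `B (x + y) = v`, then `(B + B * A) x = v`. A subspace missing a nonempty open set
is nowhere dense, so it suffices to find a ball of strictly cyclic vectors.

For that, apply Baire's theorem in `X × X` to the sets of pairs `(x, A x)` and `(A y, y)` with
`A ∈ 𝔄`, `‖A‖ ≤ n`, which cover `X × X` by semi-transitivity: the closure of one of them contains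
a ball `B(p, r)`. For `y` near `p.1`, differences of operators sending `y` close to `p.2 + z` and
to `p.2` send `y` close to any `z` with `‖z‖ < r`, with norm at most `2 n`. The iteration from
the proof of the open mapping theorem, run in the Banach space `𝔄`, turns this approximate
solvability into `𝔄 y = X`.
-/

open Metric Set Filter Topology

section OpenMapping

variable {𝕜 E F : Type*} [NontriviallyNormedField 𝕜] [NormedAddCommGroup E] [NormedSpace 𝕜 E]
  [CompleteSpace E] [NormedAddCommGroup F] [NormedSpace 𝕜 F]

namespace ContinuousLinearMap

theorem surjective_of_approx_preimage (f : E →L[𝕜] F) {C : ℝ}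
    (hf : ∀ y, ∃ x, ‖x‖ ≤ C * ‖y‖ ∧ ‖f x - y‖ ≤ ‖y‖ / 2) : Function.Surjective f := by
  choose g hg_norm hg_approx using hf
  intro y
  set u : ℕ → F := fun n => (fun z => z - f (g z))^[n] y
  have hu_succ (n : ℕ) : u (n + 1) = u n - f (g (u n)) := Function.iterate_succ_apply' _ _ _
  have hu_le (n : ℕ) : ‖u n‖ ≤ (1 / 2) ^ n * ‖y‖ := by
    induction n with
    | zero => simp [u]
    | succ n ih =>
      calc ‖u (n + 1)‖ = ‖f (g (u n)) - u n‖ := by rw [hu_succ, norm_sub_rev]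
        _ ≤ ‖u n‖ / 2 := hg_approx _
        _ ≤ (1 / 2) ^ (n + 1) * ‖y‖ := by rw [pow_succ]; linarith
  have hg_le (n : ℕ) : ‖g (u n)‖ ≤ |C| * ‖y‖ * (1 / 2) ^ n :=
    calc ‖g (u n)‖ ≤ C * ‖u n‖ := hg_norm _
      _ ≤ |C| * ((1 / 2) ^ n * ‖y‖) :=
        mul_le_mul (le_abs_self C) (hu_le n) (norm_nonneg _) (abs_nonneg C)
      _ = |C| * ‖y‖ * (1 / 2) ^ n := by ring
  obtain ⟨x, hx⟩ : Summable fun n => g (u n) :=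
    .of_norm_bounded (summable_geometric_two.mul_left _) hg_le
  have hu_tendsto : Tendsto u atTop (𝓝 0) := by
    refine squeeze_zero_norm hu_le ?_
    simpa using (tendsto_pow_atTop_nhds_zero_of_lt_one (r := (1 / 2 : ℝ)) (by norm_num)
      (by norm_num)).mul_const ‖y‖
  have hpartial (m : ℕ) : f (∑ n ∈ Finset.range m, g (u n)) = y - u m := by
    have hstep (n : ℕ) : f (g (u n)) = u n - u (n + 1) := by rw [hu_succ, sub_sub_cancel]
    simp_rw [map_sum, hstep, Finset.sum_range_sub']
    rfl
  refine ⟨x, tendsto_nhds_unique ((f.continuous.tendsto x).comp hx.tendsto_sum_nat) ?_⟩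
  simpa [Function.comp_def, hpartial] using tendsto_const_nhds.sub hu_tendsto

theorem surjective_of_ball_subset_closure_image (f : E →L[𝕜] F) {r C : ℝ} (hr : 0 < r)
    (h : ball 0 r ⊆ closure (f '' closedBall 0 C)) : Function.Surjective f := by
  obtain ⟨c, hc⟩ := NormedField.exists_one_lt_norm 𝕜
  refine f.surjective_of_approx_preimage (C := r⁻¹ * ‖c‖ * C) fun y => ?_
  rcases eq_or_ne y 0 with rfl | hy
  · exact ⟨0, by simp, by simp⟩
  obtain ⟨d, hd, hdy, -, hd_inv⟩ := rescale_to_shell hc hr hy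
  obtain ⟨_, ⟨x, hx, rfl⟩, hfx⟩ := Metric.mem_closure_iff.mp (h (mem_ball_zero_iff.mpr hdy))
    (‖d‖ * ‖y‖ / 2) (by positivity)
  have hC : 0 ≤ C := (norm_nonneg x).trans (mem_closedBall_zero_iff.mp hx)
  refine ⟨d⁻¹ • x, ?_, ?_⟩
  · calc ‖d⁻¹ • x‖ = ‖d‖⁻¹ * ‖x‖ := by rw [norm_smul, norm_inv]
      _ ≤ r⁻¹ * ‖c‖ * ‖y‖ * C := by gcongr; exact mem_closedBall_zero_iff.mp hx
      _ = r⁻¹ * ‖c‖ * C * ‖y‖ := by ring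
  · calc ‖f (d⁻¹ • x) - y‖ = ‖d‖⁻¹ * ‖f x - d • y‖ := by
          rw [map_smul, ← norm_inv, ← norm_smul, smul_sub, smul_smul, inv_mul_cancel₀ hd, one_smul]
      _ ≤ ‖d‖⁻¹ * (‖d‖ * ‖y‖ / 2) := by gcongr; rw [← dist_eq_norm, dist_comm]; exact hfx.le
      _ = ‖y‖ / 2 := by field_simp [norm_ne_zero_iff.mpr hd]

end ContinuousLinearMap

end OpenMapping

theorem Submodule.isNowhereDense_of_disjoint_isOpen {𝕜 X : Type*} [NontriviallyNormedField 𝕜]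
    [AddCommGroup X] [TopologicalSpace X] [IsTopologicalAddGroup X] [Module 𝕜 X]
    [ContinuousSMul 𝕜 X] (N : Submodule 𝕜 X) {U : Set X} (hU : IsOpen U) (hU_ne : U.Nonempty)
    (hNU : Disjoint (N : Set X) U) : IsNowhereDense (N : Set X) := by
  by_contra hN
  have hint : (interior (N.topologicalClosure : Set X)).Nonempty := by
    rw [N.topologicalClosure_coe]
    exact nonempty_iff_ne_empty.mpr hN
  have hdense : Dense (N : Set X) := by
    rw [dense_iff_closure_eq, ← N.topologicalClosure_coe,
      N.topologicalClosure.eq_top_of_nonempty_interior' hint, Submodule.top_coe]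
  obtain ⟨x, hxU, hxN⟩ := hdense.inter_open_nonempty U hU hU_ne
  exact hNU.notMem_of_mem_left hxN hxU

section StrictCyclicity

variable {𝕜 X : Type*} [NontriviallyNormedField 𝕜] [NormedAddCommGroup X] [NormedSpace 𝕜 X]
  {S : Type*} [SetLike S (X →L[𝕜] X)]

def IsStrictlyCyclic (s : S) (x : X) : Prop :=
  ∀ y, ∃ A ∈ s, A x = y

def IsStrictlySemiTransitive (s : S) : Prop :=
  ∀ x y : X, x ≠ 0 → y ≠ 0 → ∃ A ∈ s, A x = y ∨ A y = x

def boundedOrbitRel (s : S) (n : ℕ) : Set (X × X) :=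
  {q | ∃ A ∈ s, ‖A‖ ≤ n ∧ A q.1 = q.2}

theorem not_isStrictlyCyclic_zero [Nontrivial X] (s : S) : ¬ IsStrictlyCyclic s (0 : X) := by
  intro h
  obtain ⟨y, hy⟩ := exists_ne (0 : X)
  obtain ⟨A, -, hA⟩ := h y
  exact hy (by rw [← hA, map_zero])

namespace IsStrictlyCyclic

variable {𝔄 : NonUnitalSubalgebra 𝕜 (X →L[𝕜] X)}

theorem of_smul {c : 𝕜} {x : X} (h : IsStrictlyCyclic 𝔄 (c • x)) : IsStrictlyCyclic 𝔄 x := by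
  intro y
  obtain ⟨B, hB, rfl⟩ := h y
  exact ⟨c • B, SMulMemClass.smul_mem c hB, by simp⟩

theorem of_add_of_apply_eq {A : X →L[𝕜] X} (hA : A ∈ 𝔄) {x y : X} (hAx : A x = y)
    (h : IsStrictlyCyclic 𝔄 (x + y)) : IsStrictlyCyclic 𝔄 x := by
  intro v
  obtain ⟨B, hB, rfl⟩ := h v
  exact ⟨B + B * A, add_mem hB (mul_mem hB hA), by simp [hAx]⟩

theorem of_add (h𝔄 : IsStrictlySemiTransitive 𝔄) {x y : X} (h : IsStrictlyCyclic 𝔄 (x + y)) :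
    IsStrictlyCyclic 𝔄 x ∨ IsStrictlyCyclic 𝔄 y := by
  rcases eq_or_ne x 0 with rfl | hx
  · exact .inr (by simpa using h)
  rcases eq_or_ne y 0 with rfl | hy
  · exact .inl (by simpa using h)
  obtain ⟨A, hA, hAxy | hAyx⟩ := h𝔄 x y hx hy
  · exact .inl (of_add_of_apply_eq hA hAxy h)
  · exact .inr (of_add_of_apply_eq hA hAyx (add_comm x y ▸ h))

end IsStrictlyCyclic

def NonUnitalSubalgebra.nonStrictlyCyclicSubmodule [Nontrivial X]
    (𝔄 : NonUnitalSubalgebra 𝕜 (X →L[𝕜] X)) (h𝔄 : IsStrictlySemiTransitive 𝔄) :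
    Submodule 𝕜 X where
  carrier := {x | ¬ IsStrictlyCyclic 𝔄 x}
  zero_mem' := not_isStrictlyCyclic_zero 𝔄
  add_mem' hx hy hxy := (IsStrictlyCyclic.of_add h𝔄 hxy).elim hx hy
  smul_mem' _ _ hx hcx := hx hcx.of_smul

theorem exists_mem_boundedOrbitRel_or_swap {M : Submodule 𝕜 (X →L[𝕜] X)}
    (hM : IsStrictlySemiTransitive M) (q : X × X) :
    ∃ n : ℕ, q ∈ boundedOrbitRel M n ∨ q.swap ∈ boundedOrbitRel M n := by
  obtain ⟨a, b⟩ := q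
  rcases eq_or_ne b 0 with rfl | hb
  · exact ⟨0, .inl ⟨0, M.zero_mem, by simp, by simp⟩⟩
  rcases eq_or_ne a 0 with rfl | ha
  · exact ⟨0, .inr ⟨0, M.zero_mem, by simp, by simp⟩⟩
  obtain ⟨A, hA, hAab | hAba⟩ := hM a b ha hb
  · exact ⟨⌈‖A‖⌉₊, .inl ⟨A, hA, Nat.le_ceil _, hAab⟩⟩
  · exact ⟨⌈‖A‖⌉₊, .inr ⟨A, hA, Nat.le_ceil _, hAba⟩⟩

theorem exists_ball_subset_closure_boundedOrbitRel [CompleteSpace X]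
    {M : Submodule 𝕜 (X →L[𝕜] X)} (hM : IsStrictlySemiTransitive M) :
    ∃ (n : ℕ) (p : X × X) (r : ℝ), 0 < r ∧ ball p r ⊆ closure (boundedOrbitRel M n) := by
  let T : ℕ ⊕ ℕ → Set (X × X) :=
    Sum.elim (fun n => closure (boundedOrbitRel M n))
      (fun n => Prod.swap ⁻¹' closure (boundedOrbitRel M n))
  have hT_closed : ∀ i, IsClosed (T i) := by
    rintro (n | n)
    exacts [isClosed_closure, isClosed_closure.preimage continuous_swap]
  have hT_cover : ⋃ i, T i = univ := by
    refine eq_univ_of_forall fun q => ?_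
    obtain ⟨n, hq | hq⟩ := exists_mem_boundedOrbitRel_or_swap hM q
    exacts [mem_iUnion.mpr ⟨.inl n, subset_closure hq⟩, mem_iUnion.mpr ⟨.inr n, subset_closure hq⟩]
  obtain ⟨n, p, hp⟩ : ∃ (n : ℕ) (p : X × X), p ∈ interior (closure (boundedOrbitRel M n)) := by
    obtain ⟨n | n, q, hq⟩ := nonempty_interior_of_iUnion_of_closed hT_closed hT_cover
    · exact ⟨n, q, hq⟩
    · have hq' : q ∈ interior (Prod.swap ⁻¹' closure (boundedOrbitRel M n)) := hq
      rw [← Homeomorph.coe_prodComm, ← Homeomorph.preimage_interior] at hq'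
      exact ⟨n, q.swap, hq'⟩
  obtain ⟨r, hr, hball⟩ := Metric.mem_nhds_iff.mp (mem_interior_iff_mem_nhds.mp hp)
  exact ⟨n, p, r, hr, hball⟩

theorem exists_norm_apply_sub_lt_of_mem_closure_boundedOrbitRel {s : S} {n : ℕ} {x y : X}
    (h : (x, y) ∈ closure (boundedOrbitRel s n)) {ε : ℝ} (hε : 0 < ε) :
    ∃ A ∈ s, ‖A‖ ≤ n ∧ ‖A x - y‖ < ε := by
  set δ := ε / (n + 1)
  obtain ⟨⟨a, b⟩, ⟨A, hA, hAn, hAab : A a = b⟩, hdist⟩ :=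
    Metric.mem_closure_iff.mp h δ (by positivity)
  subst hAab
  rw [Prod.dist_eq, max_lt_iff, dist_eq_norm, dist_eq_norm'] at hdist
  refine ⟨A, hA, hAn, ?_⟩
  calc ‖A x - y‖ = ‖A (x - a) + (A a - y)‖ := by rw [map_sub, sub_add_sub_cancel]
    _ ≤ ‖A‖ * ‖x - a‖ + ‖A a - y‖ := (norm_add_le _ _).trans (by gcongr; exact A.le_opNorm _)
    _ ≤ n * δ + ‖A a - y‖ := by gcongr; exact hdist.1.le
    _ < n * δ + δ := by gcongr; exact hdist.2
    _ = ε := by simp only [δ]; field_simp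

theorem isStrictlyCyclic_of_ball_subset_closure [CompleteSpace X] {M : Submodule 𝕜 (X →L[𝕜] X)}
    (hM : IsClosed (M : Set (X →L[𝕜] X))) {n : ℕ} {p : X × X} {r : ℝ}
    (hball : ball p r ⊆ closure (boundedOrbitRel M n)) {y : X} (hy : y ∈ ball p.1 r) :
    IsStrictlyCyclic M y := by
  have : CompleteSpace M := hM.completeSpace_coe
  let f : M →L[𝕜] X := (ContinuousLinearMap.apply 𝕜 X y).comp M.subtypeL
  have hclosure {t : X} (ht : t ∈ ball p.2 r) : (y, t) ∈ closure (boundedOrbitRel M n) :=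
    hball (by rw [mem_ball, Prod.dist_eq]; exact max_lt hy ht)
  have hsub : ball 0 r ⊆ closure (f '' closedBall 0 (2 * n)) := by
    intro z hz
    refine Metric.mem_closure_iff.mpr fun ε hε => ?_
    obtain ⟨A₁, hA₁, hA₁n, hA₁y⟩ := exists_norm_apply_sub_lt_of_mem_closure_boundedOrbitRel
      (hclosure (t := p.2 + z) (by simpa using hz)) (half_pos hε)
    obtain ⟨A₂, hA₂, hA₂n, hA₂y⟩ := exists_norm_apply_sub_lt_of_mem_closure_boundedOrbitRel
      (hclosure (mem_ball_self (pos_of_mem_ball hy))) (half_pos hε)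
    refine ⟨f ⟨A₁ - A₂, M.sub_mem hA₁ hA₂⟩, ⟨_, ?_, rfl⟩, ?_⟩
    · rw [mem_closedBall_zero_iff, Submodule.coe_norm]
      calc ‖A₁ - A₂‖ ≤ ‖A₁‖ + ‖A₂‖ := norm_sub_le _ _
        _ ≤ 2 * n := by linarith
    · rw [dist_eq_norm']
      calc ‖(A₁ - A₂) y - z‖ = ‖(A₁ y - (p.2 + z)) - (A₂ y - p.2)‖ := by
            rw [sub_apply]; abel_nf
        _ ≤ ‖A₁ y - (p.2 + z)‖ + ‖A₂ y - p.2‖ := norm_sub_le _ _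
        _ < ε := by linarith
  intro v
  obtain ⟨⟨A, hA⟩, hAv⟩ := f.surjective_of_ball_subset_closure_image (pos_of_mem_ball hy) hsub v
  exact ⟨A, hA, hAv⟩

end StrictCyclicity

/-- Let `X` be a nonzero Banach space and `𝔄` a norm-closed, strictly semi-transitive
subalgebra of `L(X)`.  Then the set of strictly cyclic vectors for `𝔄` is residual in `X`;
in particular, `𝔄` has a strictly cyclic vector. -/
theorem stmt_15 {𝕜 X : Type*} [RCLike 𝕜]
    [NormedAddCommGroup X] [NormedSpace 𝕜 X] [CompleteSpace X] [Nontrivial X]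
    (𝔄 : NonUnitalSubalgebra 𝕜 (X →L[𝕜] X))
    (hclosed : IsClosed (𝔄 : Set (X →L[𝕜] X)))
    (hsst : ∀ x y : X, x ≠ 0 → y ≠ 0 → ∃ A ∈ 𝔄, A x = y ∨ A y = x) :
    {x : X | ∀ y : X, ∃ A ∈ 𝔄, A x = y} ∈ residual X ∧
      ∃ x : X, ∀ y : X, ∃ A ∈ 𝔄, A x = y := by
  obtain ⟨n, p, r, hr, hball⟩ :=
    exists_ball_subset_closure_boundedOrbitRel (M := 𝔄.toSubmodule) hsst
  have hcyclic (y : X) (hy : y ∈ ball p.1 r) : IsStrictlyCyclic 𝔄 y :=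
    isStrictlyCyclic_of_ball_subset_closure (M := 𝔄.toSubmodule) hclosed hball hy
  have hN : IsNowhereDense (𝔄.nonStrictlyCyclicSubmodule hsst : Set X) :=
    Submodule.isNowhereDense_of_disjoint_isOpen _ isOpen_ball ⟨p.1, mem_ball_self hr⟩
      (Set.disjoint_left.mpr fun y hyN hy => hyN (hcyclic y hy))
  exact ⟨mem_of_superset hN.isMeagre fun x hx => not_not.mp hx,
    p.1, hcyclic p.1 (mem_ball_self hr)⟩
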